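/- arXiv:2311.11600 — 4 statements merged into one kernel-verified Lean document; each statement's English description precedes it below -/
import Mathlib

section
/- Let V be a real vector space, P : V → V a linear map with P ∘ P = P (idempotent), c : ℕ → ℝ a function with c t ≠ 0 for every t, and x, z : ℕ → V sequences such that for every s ≥ 1 one has x (s-1) = (c (s-1) / c s) • (x s - P (x s)) + z s. Then for every anchor index t and every k with 1 ≤ k ≤ t, the closed-form parallel-sampling identity holds: x (t-k) = (c (t-k) / c t) • (x t - P (x t)) + P (z (t-k+1)) + ∑_{s = t-k}^{t-1} (c (t-k) / c s) • (z (s+1) - P (z (s+1))). -/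
/-!
Write `Q v = v - P v` for the complementary projection. Applying `P` to the recursion kills the
`Q`-term, so `P (x (s-1)) = P (z s)`. Applying `Q` and dividing by `c (s-1)` shows that the rescaled
components `Q (x s) / c s` change by `Q (z s) / c (s-1)` from one step to the next, so they telescope;
putting `x = P x + Q x` back together gives the closed form.
-/

open Finset

namespace LinearMap

variable {R M : Type*} [Ring R] [AddCommGroup M] [Module R M] {P : M →ₗ[R] M}

theorem map_sub_map_self_of_comp_self (hP : P ∘ₗ P = P) (v : M) : P (v - P v) = 0 := by
  rw [map_sub, ← comp_apply, hP, sub_self]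

theorem map_smul_sub_map_self_add_of_comp_self (hP : P ∘ₗ P = P) (a : R) (v y : M) :
    P (a • (v - P v) + y) = P y := by
  rw [map_add, map_smul, map_sub_map_self_of_comp_self hP, smul_zero, zero_add]

end LinearMap

theorem Finset.eq_add_sum_Ico_of_eq_add_succ {M : Type*} [AddCommGroup M] {u w : ℕ → M}
    (h : ∀ s, u s = u (s + 1) + w s) {m n : ℕ} (hmn : m ≤ n) :
    u m = u n + ∑ s ∈ Ico m n, w s := by
  have hw : ∀ s, w s = -(u (s + 1) - u s) := fun s => by rw [h s]; abel
  simp_rw [hw, sum_neg_distrib, sum_Ico_sub u hmn]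
  abel

section ProjectedRecursion

variable {K V : Type*} [Field K] [AddCommGroup V] [Module K V] {P : V →ₗ[K] V} {c : ℕ → K}
  {x z : ℕ → V}

theorem map_eq_map_of_projected_recursion (hP : P ∘ₗ P = P)
    (hrec : ∀ s, x s = (c s / c (s + 1)) • (x (s + 1) - P (x (s + 1))) + z (s + 1)) (s : ℕ) :
    P (x s) = P (z (s + 1)) := by
  rw [hrec s, LinearMap.map_smul_sub_map_self_add_of_comp_self hP]

theorem inv_smul_sub_map_self_of_projected_recursion (hP : P ∘ₗ P = P) (hc : ∀ t, c t ≠ 0)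
    (hrec : ∀ s, x s = (c s / c (s + 1)) • (x (s + 1) - P (x (s + 1))) + z (s + 1)) (s : ℕ) :
    (c s)⁻¹ • (x s - P (x s)) =
      (c (s + 1))⁻¹ • (x (s + 1) - P (x (s + 1))) + (c s)⁻¹ • (z (s + 1) - P (z (s + 1))) := by
  have hQ : x s - P (x s) =
      (c s / c (s + 1)) • (x (s + 1) - P (x (s + 1))) + (z (s + 1) - P (z (s + 1))) := by
    rw [map_eq_map_of_projected_recursion hP hrec, hrec s]
    abel
  rw [hQ, smul_add, smul_smul, div_eq_mul_inv, inv_mul_cancel_left₀ (hc s)]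

theorem eq_of_projected_recursion (hP : P ∘ₗ P = P) (hc : ∀ t, c t ≠ 0)
    (hrec : ∀ s, x s = (c s / c (s + 1)) • (x (s + 1) - P (x (s + 1))) + z (s + 1))
    {m n : ℕ} (hmn : m ≤ n) :
    x m = (c m / c n) • (x n - P (x n)) + P (z (m + 1))
      + ∑ s ∈ Ico m n, (c m / c s) • (z (s + 1) - P (z (s + 1))) := by
  have htel := eq_add_sum_Ico_of_eq_add_succ
    (inv_smul_sub_map_self_of_projected_recursion hP hc hrec) hmn
  calc x m = c m • ((c m)⁻¹ • (x m - P (x m))) + P (x m) := by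
        rw [smul_smul, mul_inv_cancel₀ (hc m), one_smul, sub_add_cancel]
    _ = _ := by
        rw [htel, map_eq_map_of_projected_recursion hP hrec m, smul_add, smul_sum]
        simp only [smul_smul, div_eq_mul_inv]
        abel

end ProjectedRecursion

/-- Abstract core of Proposition 1 (Parallel sampling): if a sequence satisfies the
linear recursion `x (s-1) = (c (s-1) / c s) • (x s - P (x s)) + z s` for an idempotent
linear map `P` and a nonvanishing function `c`, then the closed-form parallel-sampling
identity holds. -/
theorem parallel_sampling_abstract
    {V : Type*} [AddCommGroup V] [Module ℝ V]
    (P : V →ₗ[ℝ] V) (hP : P ∘ₗ P = P)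
    (c : ℕ → ℝ) (hc : ∀ t, c t ≠ 0)
    (x z : ℕ → V)
    (hrec : ∀ s : ℕ, 1 ≤ s →
      x (s - 1) = (c (s - 1) / c s) • (x s - P (x s)) + z s) :
    ∀ t k : ℕ, 1 ≤ k → k ≤ t →
      x (t - k) =
        (c (t - k) / c t) • (x t - P (x t)) + P (z (t - k + 1))
          + ∑ s ∈ Finset.Icc (t - k) (t - 1),
              (c (t - k) / c s) • (z (s + 1) - P (z (s + 1))) := by
  have hrec' : ∀ s, x s = (c s / c (s + 1)) • (x (s + 1) - P (x (s + 1))) + z (s + 1) :=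
    fun s => by simpa only [Nat.add_sub_cancel] using hrec (s + 1) (Nat.le_add_left 1 s)
  intro t k hk hkt
  have ht : ¬IsMin t := by simpa [isMin_iff_eq_bot] using Nat.one_le_iff_ne_zero.mp (hk.trans hkt)
  rw [Icc_sub_one_right_eq_Ico_of_not_isMin ht]
  exact eq_of_projected_recursion hP hc hrec' (Nat.sub_le t k)
end

section
/- Let A be an m × n real matrix and A⁺ an n × m real matrix satisfying A * A⁺ * A = A. Let ᾱ : ℕ → ℝ be strictly positive, let 0 ≤ η < 1, let y ∈ ℝ^m, let ε_θ : ℝ^n × ℕ → ℝ^n be any function, and let ε : ℕ → ℝ^n. For s ≥ 1 set α s := ᾱ s / ᾱ (s-1), c¹ s := √(1 - ᾱ s) · η, c² s := √(1 - ᾱ s) · √(1 - η²), and z s := c² s • ε_θ (x s, s) - √((1 - ᾱ s)/α s) • (ε_θ (x s, s) - A⁺ A ε_θ (x s, s)) + √(ᾱ (s-1)) • A⁺ y + c¹ s • ε s. Suppose the sequence x : ℕ → ℝ^n satisfies, for every s ≥ 1, the projected DDIM update x (s-1) = √(ᾱ (s-1)) • x̂₀|s + c² s • ε_θ (x s, s)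 + c¹ s • ε s, where x₀|s := (1/√(ᾱ s)) • (x s - √(1 - ᾱ s) • ε_θ (x s, s)) and x̂₀|s := A⁺ y + (x₀|s - A⁺ A x₀|s). Then for every T and every k with 1 ≤ k ≤ T: x (T-k) = (√(ᾱ (T-k))/√(ᾱ T)) • (x T - A⁺ A (x T)) + A⁺ A (z (T-k+1)) + ∑_{s = T-k}^{T-1} (√(ᾱ (T-k))/√(ᾱ s)) • (z (s+1) - A⁺ A (z (s+1))). -/
/-!
Since `A A⁺ A = A`, the matrix `P = A⁺ A` is idempotent. One projected DDIM step rewrites as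
`x (s-1) = (√ᾱ(s-1) / √ᾱ s) • (I - P) x s + z s`. Applying `P` kills the first term, so
`P x (s-1) = P z s`; applying `I - P` gives a linear recurrence for `(I - P) x` driven by
`(I - P) z`, whose ratios `√ᾱ(s-1) / √ᾱ s` telescope.
-/

open Finset

theorem Matrix.isIdempotentElem_mul_of_mul_mul_eq {l m R : Type*} [Fintype l] [Fintype m]
    [Semiring R] {A : Matrix l m R} {B : Matrix m l R} (h : A * B * A = A) :
    IsIdempotentElem (B * A) := by
  rw [IsIdempotentElem, Matrix.mul_assoc, ← Matrix.mul_assoc A, h]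

theorem Real.sqrt_div_div (b : ℝ) {a a' : ℝ} (ha : 0 ≤ a) (ha' : 0 ≤ a') :
    √(b / (a / a')) = √b * (√a' / √a) := by
  rw [div_div_eq_mul_div, mul_div_assoc, Real.sqrt_mul' _ (div_nonneg ha' ha),
    Real.sqrt_div ha']

section Recurrence

variable {K V : Type*} [Field K] [AddCommGroup V] [Module K V] {c : ℕ → K}

theorem eq_smul_add_sum_of_backward_recurrence (hc : ∀ t, c t ≠ 0) {u w : ℕ → V}
    (hu : ∀ s, u s = (c s / c (s + 1)) • u (s + 1) + w (s + 1)) (i j : ℕ) :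
    u i = (c i / c (i + j)) • u (i + j) + ∑ s ∈ Ico i (i + j), (c i / c s) • w (s + 1) := by
  induction j generalizing i with
  | zero => simp [div_self (hc i)]
  | succ j ih =>
    rw [sum_eq_sum_Ico_succ_bot (by omega), div_self (hc i), one_smul, hu i, ih (i + 1),
      smul_add, smul_sum, smul_smul, show i + 1 + j = i + (j + 1) by omega]
    simp only [smul_smul, div_mul_div_cancel₀ (hc (i + 1))]
    abel

theorem eq_projected_closed_form {P : Module.End K V} (hP : IsIdempotentElem P)
    (hc : ∀ t, c t ≠ 0) {x z : ℕ → V}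
    (hx : ∀ s, x s = (c s / c (s + 1)) • (x (s + 1) - P (x (s + 1))) + z (s + 1)) (i j : ℕ) :
    x i = (c i / c (i + j)) • (x (i + j) - P (x (i + j))) + P (z (i + 1))
      + ∑ s ∈ Ico i (i + j), (c i / c s) • (z (s + 1) - P (z (s + 1))) := by
  have hPQ : ∀ v, P (v - P v) = 0 := fun v => by
    simpa using LinearMap.congr_fun hP.mul_one_sub_self v
  have hQ : ∀ s, x s - P (x s) = (c s / c (s + 1)) • (x (s + 1) - P (x (s + 1)))
      + (z (s + 1) - P (z (s + 1))) := fun s => by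
    conv_lhs => rw [hx s]
    rw [map_add, map_smul, hPQ, smul_zero, zero_add, smul_sub]
    abel
  have hPx : P (x i) = P (z (i + 1)) := by
    rw [hx i, map_add, map_smul, hPQ, smul_zero, zero_add]
  have hQx := eq_smul_add_sum_of_backward_recurrence (u := fun s => x s - P (x s))
    (w := fun s => z s - P (z s)) hc hQ i j
  rw [add_right_comm, ← hQx, ← hPx, sub_add_cancel]

end Recurrence

theorem ddnm_update_eq {V : Type*} [AddCommGroup V] [Module ℝ V] (P : Module.End ℝ V)
    {a a' : ℝ} (ha : 0 ≤ a) (ha' : 0 ≤ a') (b e x w : V) (c : ℝ) :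
    √a' • (b + ((1 / √a) • (x - √(1 - a) • e) - P ((1 / √a) • (x - √(1 - a) • e))))
        + c • e + w
      = (√a' / √a) • (x - P x)
        + (c • e - √((1 - a) / (a / a')) • (e - P e) + √a' • b + w) := by
  rw [Real.sqrt_div_div _ ha ha']
  simp only [map_smul, map_sub, smul_sub, smul_add, smul_smul]
  module

theorem parallel_sampling_prop1_general
    {m n : ℕ}
    (A : Matrix (Fin m) (Fin n) ℝ) (Ap : Matrix (Fin n) (Fin m) ℝ)
    (hA : A * Ap * A = A)
    (ab : ℕ → ℝ) (hab : ∀ t, 0 < ab t)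
    (η : ℝ)
    (y : Fin m → ℝ)
    (εθ : (Fin n → ℝ) → ℕ → (Fin n → ℝ))
    (ε : ℕ → (Fin n → ℝ))
    (x : ℕ → (Fin n → ℝ))
    (z : ℕ → (Fin n → ℝ))
    -- definition of the additive term z s for s ≥ 1
    (hz : ∀ s : ℕ, 1 ≤ s →
      z s = (Real.sqrt (1 - ab s) * Real.sqrt (1 - η ^ 2)) • εθ (x s) s
        - Real.sqrt ((1 - ab s) / (ab s / ab (s - 1))) •
            (εθ (x s) s - Ap.mulVec (A.mulVec (εθ (x s) s)))
        + Real.sqrt (ab (s - 1)) • Ap.mulVec y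
        + (Real.sqrt (1 - ab s) * η) • ε s)
    -- the projected DDIM update:
    -- x (s-1) = √(ab (s-1)) • x̂₀|s + c² s • ε_θ(x s, s) + c¹ s • ε s,
    -- where x₀|s = (1/√(ab s)) • (x s - √(1 - ab s) • ε_θ(x s, s)) and
    -- x̂₀|s = A⁺ y + (x₀|s - A⁺ A x₀|s)
    (hx : ∀ s : ℕ, 1 ≤ s →
      x (s - 1) =
        Real.sqrt (ab (s - 1)) •
          (Ap.mulVec y +
            ((1 / Real.sqrt (ab s)) •
                (x s - Real.sqrt (1 - ab s) • εθ (x s) s)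
              - Ap.mulVec (A.mulVec
                  ((1 / Real.sqrt (ab s)) •
                    (x s - Real.sqrt (1 - ab s) • εθ (x s) s)))))
        + (Real.sqrt (1 - ab s) * Real.sqrt (1 - η ^ 2)) • εθ (x s) s
        + (Real.sqrt (1 - ab s) * η) • ε s) :
    ∀ T k : ℕ, 1 ≤ k → k ≤ T →
      x (T - k) =
        (Real.sqrt (ab (T - k)) / Real.sqrt (ab T)) •
            (x T - Ap.mulVec (A.mulVec (x T)))
          + Ap.mulVec (A.mulVec (z (T - k + 1)))
          + ∑ s ∈ Finset.Icc (T - k) (T - 1),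
              (Real.sqrt (ab (T - k)) / Real.sqrt (ab s)) •
                (z (s + 1) - Ap.mulVec (A.mulVec (z (s + 1)))) := by
  intro T k hk hkT
  set P := Matrix.toLinAlgEquiv' (Ap * A) with hPdef
  have hP : IsIdempotentElem P :=
    (Matrix.isIdempotentElem_mul_of_mul_mul_eq hA).map Matrix.toLinAlgEquiv'
  have hPv : ∀ v, Ap.mulVec (A.mulVec v) = P v := fun v => by
    rw [hPdef, Matrix.mulVec_mulVec, Matrix.toLinAlgEquiv'_apply]
  have hstep : ∀ s,
      x s = (√(ab s) / √(ab (s + 1))) • (x (s + 1) - P (x (s + 1))) + z (s + 1) := fun s => by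
    have hxs := hx (s + 1) (Nat.le_add_left 1 s)
    rw [Nat.add_sub_cancel] at hxs
    rw [hxs, hz (s + 1) (Nat.le_add_left 1 s), Nat.add_sub_cancel]
    simp only [hPv]
    exact ddnm_update_eq P (hab _).le (hab _).le _ _ _ _ _
  have hclosed := eq_projected_closed_form hP (fun t => (Real.sqrt_pos.2 (hab t)).ne') hstep
    (T - k) k
  have hT : ¬IsMin T := by rw [isMin_iff_eq_bot, Nat.bot_eq_zero]; omega
  rw [Nat.sub_add_cancel hkT] at hclosed
  rw [hclosed, Finset.Icc_sub_one_right_eq_Ico_of_not_isMin hT]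
  simp only [hPv]

/-- Proposition 1 (Parallel sampling): for the projected DDIM update with
range–null space correction (DDNM), under the Moore–Penrose identity
`A * A⁺ * A = A`, the state `x (T-k)` admits a closed form in terms of
`x T` and the additive terms `z`. -/
theorem parallel_sampling_prop1
    {m n : ℕ}
    (A : Matrix (Fin m) (Fin n) ℝ) (Ap : Matrix (Fin n) (Fin m) ℝ)
    (hA : A * Ap * A = A)
    (ab : ℕ → ℝ) (hab : ∀ t, 0 < ab t)
    (η : ℝ) (hη0 : 0 ≤ η) (hη1 : η < 1)
    (y : Fin m → ℝ)
    (εθ : (Fin n → ℝ) → ℕ → (Fin n → ℝ))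
    (ε : ℕ → (Fin n → ℝ))
    (x : ℕ → (Fin n → ℝ))
    (z : ℕ → (Fin n → ℝ))
    -- definition of the additive term z s for s ≥ 1
    (hz : ∀ s : ℕ, 1 ≤ s →
      z s = (Real.sqrt (1 - ab s) * Real.sqrt (1 - η ^ 2)) • εθ (x s) s
        - Real.sqrt ((1 - ab s) / (ab s / ab (s - 1))) •
            (εθ (x s) s - Ap.mulVec (A.mulVec (εθ (x s) s)))
        + Real.sqrt (ab (s - 1)) • Ap.mulVec y
        + (Real.sqrt (1 - ab s) * η) • ε s)
    -- the projected DDIM update: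
    -- x (s-1) = √(ab (s-1)) • x̂₀|s + c² s • ε_θ(x s, s) + c¹ s • ε s,
    -- where x₀|s = (1/√(ab s)) • (x s - √(1 - ab s) • ε_θ(x s, s)) and
    -- x̂₀|s = A⁺ y + (x₀|s - A⁺ A x₀|s)
    (hx : ∀ s : ℕ, 1 ≤ s →
      x (s - 1) =
        Real.sqrt (ab (s - 1)) •
          (Ap.mulVec y +
            ((1 / Real.sqrt (ab s)) •
                (x s - Real.sqrt (1 - ab s) • εθ (x s) s)
              - Ap.mulVec (A.mulVec
                  ((1 / Real.sqrt (ab s)) •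
                    (x s - Real.sqrt (1 - ab s) • εθ (x s) s)))))
        + (Real.sqrt (1 - ab s) * Real.sqrt (1 - η ^ 2)) • εθ (x s) s
        + (Real.sqrt (1 - ab s) * η) • ε s) :
    ∀ T k : ℕ, 1 ≤ k → k ≤ T →
      x (T - k) =
        (Real.sqrt (ab (T - k)) / Real.sqrt (ab T)) •
            (x T - Ap.mulVec (A.mulVec (x T)))
          + Ap.mulVec (A.mulVec (z (T - k + 1)))
          + ∑ s ∈ Finset.Icc (T - k) (T - 1),
              (Real.sqrt (ab (T - k)) / Real.sqrt (ab s)) •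
                (z (s + 1) - Ap.mulVec (A.mulVec (z (s + 1)))) :=
  parallel_sampling_prop1_general A Ap hA ab hab η y εθ ε x z hz hx
end

section
/- Let A be an m × n real matrix, A⁺ an n × m real matrix, ᾱ : ℕ → ℝ strictly positive, 0 ≤ η < 1, y ∈ ℝ^m, e ∈ ℝ^n (the predicted noise ε_θ(x_s, s)), w ∈ ℝ^n (the stochastic noise ε_s), and x_s ∈ ℝ^n. For s ≥ 1 set α s := ᾱ s / ᾱ (s-1), c¹ s := √(1 - ᾱ s) · η, c² s := √(1 - ᾱ s) · √(1 - η²), x₀|s := (1/√(ᾱ s)) • (x_s - √(1 - ᾱ s) • e), and x̂₀|s := A⁺ y + (x₀|s - A⁺ A x₀|s). Then the single DDIM update equals the projected linear recursion: √(ᾱ (s-1)) • x̂₀|s + c² s • e + c¹ s • w = (√(ᾱ (s-1))/√(ᾱ s)) • (x_s - A⁺ A x_s) + z s, where z s := c² s • e - √((1 - ᾱ s)/α s) • (e - A⁺ A e) + √(ᾱ (s-1)) • A⁺ y + c¹ s • w. -/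
/-!
Both sides are linear in `x_s`, `e`, `w` and `A⁺ y`, with `A⁺A` entering only through `A⁺A x_s`
and `A⁺A e`, so the identity holds for any linear map in place of `A⁺A` once the coefficient of
`e - A⁺A e` is matched: `√((1 - ᾱ s) / (ᾱ s / ᾱ (s-1))) = √(ᾱ (s-1)) √(1 - ᾱ s) / √(ᾱ s)`.
-/

theorem Real.sqrt_div_div_eq_sqrt_mul_sqrt_div {a b c : ℝ} (ha : 0 ≤ a) (hb : 0 ≤ b) :
    √(c / (a / b)) = √b * √c / √a := by
  rw [div_div_eq_mul_div, Real.sqrt_div' _ ha, Real.sqrt_mul' _ hb, mul_comm]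

theorem LinearMap.ddim_step_eq_projected_recursion {K V : Type*} [Field K] [AddCommGroup V]
    [Module K V] (P : V →ₗ[K] V) (a b c d f : K) (u x e w : V) :
    a • (u + ((1 / b) • (x - c • e) - P ((1 / b) • (x - c • e)))) + d • e + f • w
      = (a / b) • (x - P x) + (d • e - (a * c / b) • (e - P e) + a • u + f • w) := by
  simp only [map_smul, map_sub]
  module

theorem ddim_one_step_projected_identity_general
    {m n : ℕ}
    (A : Matrix (Fin m) (Fin n) ℝ) (Ap : Matrix (Fin n) (Fin m) ℝ)
    (ab : ℕ → ℝ) (hab : ∀ t, 0 < ab t)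
    (η : ℝ)
    (y : Fin m → ℝ) (e w xs : Fin n → ℝ)
    (s : ℕ) :
    Real.sqrt (ab (s - 1)) •
        (Ap.mulVec y +
          ((1 / Real.sqrt (ab s)) • (xs - Real.sqrt (1 - ab s) • e)
            - Ap.mulVec (A.mulVec
                ((1 / Real.sqrt (ab s)) • (xs - Real.sqrt (1 - ab s) • e)))))
      + (Real.sqrt (1 - ab s) * Real.sqrt (1 - η ^ 2)) • e
      + (Real.sqrt (1 - ab s) * η) • w
    = (Real.sqrt (ab (s - 1)) / Real.sqrt (ab s)) •
          (xs - Ap.mulVec (A.mulVec xs))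
        + ((Real.sqrt (1 - ab s) * Real.sqrt (1 - η ^ 2)) • e
            - Real.sqrt ((1 - ab s) / (ab s / ab (s - 1))) •
                (e - Ap.mulVec (A.mulVec e))
            + Real.sqrt (ab (s - 1)) • Ap.mulVec y
            + (Real.sqrt (1 - ab s) * η) • w) := by
  rw [Real.sqrt_div_div_eq_sqrt_mul_sqrt_div (hab s).le (hab (s - 1)).le]
  exact (Ap.mulVecLin ∘ₗ A.mulVecLin).ddim_step_eq_projected_recursion _ _ _ _ _ _ _ _ _

/-- Key one-step algebraic identity in the proof of Proposition 1: a single DDIM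
reverse step applied to the range–null space corrected estimate
`x̂₀|s = A⁺ y + (I - A⁺A) x₀|s` equals the projected linear recursion
`(√(ᾱ(s-1))/√(ᾱ s)) • (I - A⁺A) x_s + z s`. -/
theorem ddim_one_step_projected_identity
    {m n : ℕ}
    (A : Matrix (Fin m) (Fin n) ℝ) (Ap : Matrix (Fin n) (Fin m) ℝ)
    (ab : ℕ → ℝ) (hab : ∀ t, 0 < ab t)
    (η : ℝ) (hη0 : 0 ≤ η) (hη1 : η < 1)
    (y : Fin m → ℝ) (e w xs : Fin n → ℝ)
    (s : ℕ) (hs : 1 ≤ s) :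
    Real.sqrt (ab (s - 1)) •
        (Ap.mulVec y +
          ((1 / Real.sqrt (ab s)) • (xs - Real.sqrt (1 - ab s) • e)
            - Ap.mulVec (A.mulVec
                ((1 / Real.sqrt (ab s)) • (xs - Real.sqrt (1 - ab s) • e)))))
      + (Real.sqrt (1 - ab s) * Real.sqrt (1 - η ^ 2)) • e
      + (Real.sqrt (1 - ab s) * η) • w
    = (Real.sqrt (ab (s - 1)) / Real.sqrt (ab s)) •
          (xs - Ap.mulVec (A.mulVec xs))
        + ((Real.sqrt (1 - ab s) * Real.sqrt (1 - η ^ 2)) • e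
            - Real.sqrt ((1 - ab s) / (ab s / ab (s - 1))) •
                (e - Ap.mulVec (A.mulVec e))
            + Real.sqrt (ab (s - 1)) • Ap.mulVec y
            + (Real.sqrt (1 - ab s) * η) • w) :=
  ddim_one_step_projected_identity_general A Ap ab hab η y e w xs s
end

section
/- Let V be a real vector space, P : V → V a linear map with P ∘ P = P, c : ℕ → ℝ with c t ≠ 0 for every t, z : ℕ → V, and fix T ≥ 1 and x_T ∈ V. For a sequence x : ℕ → V with x T = x_T, the following are equivalent: (i) for every s with 1 ≤ s ≤ T, x (s-1) = (c (s-1)/c s) • (x s - P (x s)) + z s (sequential sampling); (ii) for every k with 1 ≤ k ≤ T, x (T-k) = (c (T-k)/c T) • (x_T - P x_T) + P (z (T-k+1)) + ∑_{s = T-k}^{T-1} (c (T-k)/c s) • (z (s+1) - P (z (s+1))) (i.e., (x_0, …, x_{T-1}) is a fixed point of the fully-lower-triangular parallel map F). -/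
/-!
Read backwards in time, the sequential recursion `x (s - 1) = f s (x s)` is a first-order
recursion, so a sequence satisfies it on `1 ≤ s ≤ T` iff it agrees below `T` with any fixed
solution having the same first step. The parallel formula `y t` is such a solution: since
`(I - P) ∘ P = 0`, the `P`-part of `y (t + 1)` is killed by the step map, and the ratios
`c t / c s` telescope, so `y t = (c t / c (t + 1)) • (y (t + 1) - P y (t + 1)) + z (t + 1)`.
-/

open Finset

theorem backward_recursion_iff_eq_of_solution {α : Type*} (f : ℕ → α → α) (x y : ℕ → α)
    (T : ℕ) (hy : ∀ s, 1 ≤ s → s ≤ T → y (s - 1) = f s (y s))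
    (hT : f T (y T) = f T (x T)) :
    (∀ s, 1 ≤ s → s ≤ T → x (s - 1) = f s (x s)) ↔
      ∀ k, 1 ≤ k → k ≤ T → x (T - k) = y (T - k) := by
  constructor
  · intro hx k hk1 hkT
    induction k with
    | zero => omega
    | succ k ih =>
      rcases Nat.eq_zero_or_pos k with rfl | hk
      · rw [hx T hkT le_rfl, ← hT, hy T hkT le_rfl]
      · have hstep : T - (k + 1) = T - k - 1 := by omega
        rw [hstep, hx (T - k) (by omega) (by omega), ih hk (by omega),
          hy (T - k) (by omega) (by omega)]
  · intro hxy s hs1 hsT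
    have hprev : x (s - 1) = y (s - 1) := by
      simpa [show T - (T - s + 1) = s - 1 by omega] using hxy (T - s + 1) (by omega) (by omega)
    rw [hprev, hy s hs1 hsT]
    rcases hsT.eq_or_lt with rfl | hsT
    · exact hT
    · simpa [show T - (T - s) = s by omega] using
        congrArg (f s) (hxy (T - s) (by omega) (by omega)).symm

section ParallelSampling

variable {K V : Type*} [Field K] [AddCommGroup V] [Module K V]

theorem sum_Icc_div_smul_eq_add_smul_sum (c : ℕ → K) (w : ℕ → V) {t n : ℕ} (htn : t ≤ n)
    (ht : c t ≠ 0) (ht1 : c (t + 1) ≠ 0) :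
    ∑ s ∈ Icc t n, (c t / c s) • w s
      = w t + (c t / c (t + 1)) • ∑ s ∈ Icc (t + 1) n, (c (t + 1) / c s) • w s := by
  rw [← insert_Icc_add_one_left_eq_Icc htn, sum_insert (by simp), div_self ht, one_smul,
    smul_sum]
  simp only [smul_smul, div_mul_div_cancel₀ ht1]

/-- The state at time `t` of the closed-form (parallel) sampler, i.e. Proposition 1. -/
def parallelState (P : V →ₗ[K] V) (c : ℕ → K) (z : ℕ → V) (T : ℕ) (xT : V) (t : ℕ) : V :=
  (c t / c T) • (xT - P xT) + P (z (t + 1))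
    + ∑ s ∈ Icc t (T - 1), (c t / c s) • (z (s + 1) - P (z (s + 1)))

variable {P : V →ₗ[K] V} (c : ℕ → K) (z : ℕ → V) (T : ℕ) (xT : V)

theorem parallelState_sub_apply (hP : P ∘ₗ P = P) (t : ℕ) :
    parallelState P c z T xT t - P (parallelState P c z T xT t)
      = (c t / c T) • (xT - P xT)
        + ∑ s ∈ Icc t (T - 1), (c t / c s) • (z (s + 1) - P (z (s + 1))) := by
  have hPP : ∀ v, P (P v) = P v := LinearMap.congr_fun hP
  simp only [parallelState, map_add, map_smul, map_sub, map_sum, hPP, sub_self, smul_zero,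
    sum_const_zero]
  abel

theorem parallelState_eq_step (hP : P ∘ₗ P = P) {t : ℕ} (htT : t < T)
    (ht : c t ≠ 0) (ht1 : c (t + 1) ≠ 0) :
    parallelState P c z T xT t
      = (c t / c (t + 1)) • (parallelState P c z T xT (t + 1)
          - P (parallelState P c z T xT (t + 1))) + z (t + 1) := by
  rw [parallelState_sub_apply c z T xT hP, parallelState,
    sum_Icc_div_smul_eq_add_smul_sum c _ (by omega) ht ht1, smul_add, smul_smul,
    div_mul_div_cancel₀ ht1]
  abel

theorem parallelState_top_sub_apply (hP : P ∘ₗ P = P) (hT : 1 ≤ T) (hcT : c T ≠ 0) :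
    parallelState P c z T xT T - P (parallelState P c z T xT T) = xT - P xT := by
  rw [parallelState_sub_apply c z T xT hP, div_self hcT, one_smul,
    Icc_eq_empty_of_lt (by omega), sum_empty, add_zero]

end ParallelSampling

/-- The fixed points of the fully-lower-triangular parallel sampling map are exactly
the trajectories of the sequential sampling recursion. -/
theorem sequential_iff_parallel_fixed_point
    {V : Type*} [AddCommGroup V] [Module ℝ V]
    (P : V →ₗ[ℝ] V) (hP : P ∘ₗ P = P)
    (c : ℕ → ℝ) (hc : ∀ t, c t ≠ 0)
    (z : ℕ → V) (T : ℕ) (hT : 1 ≤ T) (xT : V)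
    (x : ℕ → V) (hxT : x T = xT) :
    (∀ s : ℕ, 1 ≤ s → s ≤ T →
        x (s - 1) = (c (s - 1) / c s) • (x s - P (x s)) + z s)
    ↔ (∀ k : ℕ, 1 ≤ k → k ≤ T →
        x (T - k) =
          (c (T - k) / c T) • (xT - P xT) + P (z (T - k + 1))
            + ∑ s ∈ Finset.Icc (T - k) (T - 1),
                (c (T - k) / c s) • (z (s + 1) - P (z (s + 1)))) := by
  let step : ℕ → V → V := fun s v ↦ (c (s - 1) / c s) • (v - P v) + z s
  have hy : ∀ s, 1 ≤ s → s ≤ T → parallelState P c z T xT (s - 1)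
      = step s (parallelState P c z T xT s) := by
    rintro (_ | t) hs hsT
    · omega
    · exact parallelState_eq_step c z T xT hP hsT (hc t) (hc (t + 1))
  have hTop : step T (parallelState P c z T xT T) = step T (x T) := by
    simp only [step, parallelState_top_sub_apply c z T xT hP hT (hc T), hxT]
  exact backward_recursion_iff_eq_of_solution step x _ T hy hTop
end
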